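/- Iterated commutator identity for the parabolic problem: Let d ≥ 1, ϑ ∈ ℝ, V ∈ C²(ℝ^d, ℝ), and let v : ℝ^d → ℝ be of class C². Define F₂(v) = (V + ϑ v²) v, G₁(v) = − ΔV v − 2 ∇V·∇v − 6ϑ (∇v·∇v) v, and for a C¹ function w define G₁′(v)w = − ΔV w − 2 ∇V·∇w − 6ϑ ( 2 (∇v·∇w) v + (∇v·∇v) w ). Then pointwise on ℝ^d: (V + 3ϑ v²) G₁(v) − G₁′(v) F₂(v) = 2 ( |∇V|² + ϑ ( − ΔV v² + 6 (∇V·∇v) v + 6 (V + 2ϑ v²)(∇v·∇v) ) ) v. -/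

import Mathlib

/-! Only `F₂(v)` gets differentiated: by the product rule
`∇F₂(v) = v ∇V + (V + 3ϑv²) ∇v`, so `G₁′(v) F₂(v)` expands into the pairings `∇V·∇V`, `∇V·∇v`,
`∇v·∇v` already present in `G₁(v)`, and the identity reduces to a polynomial identity in these
pairings and the values `V`, `v`, `ΔV`. -/

open Complex

/-- `j`-th partial derivative of a complex-valued function on `ℝ^d`. -/
noncomputable def pdC {d : ℕ} (j : Fin d) (w : (Fin d → ℝ) → ℂ) (x : Fin d → ℝ) : ℂ :=
  fderiv ℝ w x (Pi.single j 1)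

/-- Laplacian of a complex-valued function on `ℝ^d`. -/
noncomputable def lapC {d : ℕ} (w : (Fin d → ℝ) → ℂ) (x : Fin d → ℝ) : ℂ :=
  ∑ j, pdC j (fun y => pdC j w y) x

/-- Gradient dot product `∇w·∇z` of complex-valued functions on `ℝ^d`. -/
noncomputable def gdotC {d : ℕ} (w z : (Fin d → ℝ) → ℂ) (x : Fin d → ℝ) : ℂ :=
  ∑ j, pdC j w x * pdC j z x

/-- `j`-th partial derivative of a real-valued function on `ℝ^d`. -/
noncomputable def pdR {d : ℕ} (j : Fin d) (w : (Fin d → ℝ) → ℝ) (x : Fin d → ℝ) : ℝ :=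
  fderiv ℝ w x (Pi.single j 1)

/-- Laplacian of a real-valued function on `ℝ^d`. -/
noncomputable def lapR {d : ℕ} (w : (Fin d → ℝ) → ℝ) (x : Fin d → ℝ) : ℝ :=
  ∑ j, pdR j (fun y => pdR j w y) x

/-- Gradient dot product `∇w·∇z` of real-valued functions on `ℝ^d`. -/
noncomputable def gdotR {d : ℕ} (w z : (Fin d → ℝ) → ℝ) (x : Fin d → ℝ) : ℝ :=
  ∑ j, pdR j w x * pdR j z x

/-- `F₂(v) = (V + ϑ v²) v` for the parabolic problem. -/
noncomputable def F2par {d : ℕ} (V : (Fin d → ℝ) → ℝ) (ϑ : ℝ)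
    (v : (Fin d → ℝ) → ℝ) : (Fin d → ℝ) → ℝ :=
  fun y => (V y + ϑ * (v y) ^ 2) * v y

/-- `G₁(v) = −ΔV v − 2 ∇V·∇v − 6ϑ (∇v·∇v) v` for the parabolic problem. -/
noncomputable def G1par {d : ℕ} (V : (Fin d → ℝ) → ℝ) (ϑ : ℝ)
    (v : (Fin d → ℝ) → ℝ) : (Fin d → ℝ) → ℝ :=
  fun y => - lapR V y * v y - 2 * gdotR V v y - 6 * ϑ * gdotR v v y * v y

/-- `G₁′(v)w = −ΔV w − 2 ∇V·∇w − 6ϑ (2(∇v·∇w)v + (∇v·∇v)w)`. -/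
noncomputable def G1parD {d : ℕ} (V : (Fin d → ℝ) → ℝ) (ϑ : ℝ)
    (v w : (Fin d → ℝ) → ℝ) : (Fin d → ℝ) → ℝ :=
  fun y => - lapR V y * w y - 2 * gdotR V w y
    - 6 * ϑ * (2 * gdotR v w y * v y + gdotR v v y * w y)

section

variable {d : ℕ} {V v : (Fin d → ℝ) → ℝ} {x : Fin d → ℝ}

lemma gdotR_comm (w z : (Fin d → ℝ) → ℝ) : gdotR w z = gdotR z w := by
  ext y
  exact Finset.sum_congr rfl fun j _ => mul_comm _ _

lemma pdR_F2par (ϑ : ℝ) (hV : DifferentiableAt ℝ V x) (hv : DifferentiableAt ℝ v x)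
    (j : Fin d) :
    pdR j (F2par V ϑ v) x = pdR j V x * v x + (V x + 3 * ϑ * v x ^ 2) * pdR j v x := by
  have hF : HasFDerivAt (fun y => (V y + ϑ * v y ^ 2) * v y) _ x :=
    (hV.hasFDerivAt.add ((hv.hasFDerivAt.pow 2).const_mul ϑ)).mul hv.hasFDerivAt
  unfold pdR F2par
  rw [hF.fderiv]
  simp only [Pi.add_apply, Nat.add_one_sub_one, pow_one, nsmul_eq_mul, Nat.cast_ofNat, smul_add,
    add_apply, smul_apply, smul_eq_mul]
  ring

lemma gdotR_F2par (ϑ : ℝ) (hV : DifferentiableAt ℝ V x) (hv : DifferentiableAt ℝ v x)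
    (w : (Fin d → ℝ) → ℝ) :
    gdotR w (F2par V ϑ v) x = gdotR w V x * v x + (V x + 3 * ϑ * v x ^ 2) * gdotR w v x := by
  simp only [gdotR, pdR_F2par ϑ hV hv, mul_add, Finset.sum_add_distrib, Finset.sum_mul,
    Finset.mul_sum]
  congr 1 <;> exact Finset.sum_congr rfl fun j _ => by ring

end

theorem iterated_commutator_parabolic_general {d : ℕ} (ϑ : ℝ)
    (V : (Fin d → ℝ) → ℝ) (hV : ContDiff ℝ 2 V)
    (v : (Fin d → ℝ) → ℝ) (hv : ContDiff ℝ 2 v) (x : Fin d → ℝ) :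
    (V x + 3 * ϑ * (v x) ^ 2) * G1par V ϑ v x - G1parD V ϑ v (F2par V ϑ v) x
    = 2 * (gdotR V V x
        + ϑ * (- lapR V x * (v x) ^ 2 + 6 * gdotR V v x * v x
            + 6 * (V x + 2 * ϑ * (v x) ^ 2) * gdotR v v x)) * v x := by
  have hV' : DifferentiableAt ℝ V x := (hV.differentiable two_ne_zero).differentiableAt
  have hv' : DifferentiableAt ℝ v x := (hv.differentiable two_ne_zero).differentiableAt
  simp only [G1par, G1parD, gdotR_F2par ϑ hV' hv', gdotR_comm v V, F2par]
  ring

/-- **Iterated commutator identity for the parabolic problem**: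
`(V + 3ϑv²) G₁(v) − G₁′(v) F₂(v)
  = 2 (|∇V|² + ϑ(−ΔV v² + 6(∇V·∇v)v + 6(V + 2ϑv²)(∇v·∇v))) v` pointwise. -/
theorem iterated_commutator_parabolic {d : ℕ} (hd : 1 ≤ d) (ϑ : ℝ)
    (V : (Fin d → ℝ) → ℝ) (hV : ContDiff ℝ 2 V)
    (v : (Fin d → ℝ) → ℝ) (hv : ContDiff ℝ 2 v) (x : Fin d → ℝ) :
    (V x + 3 * ϑ * (v x) ^ 2) * G1par V ϑ v x - G1parD V ϑ v (F2par V ϑ v) x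
    = 2 * (gdotR V V x
        + ϑ * (- lapR V x * (v x) ^ 2 + 6 * gdotR V v x * v x
            + 6 * (V x + 2 * ϑ * (v x) ^ 2) * gdotR v v x)) * v x :=
  iterated_commutator_parabolic_general ϑ V hV v hv x
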